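/- arXiv:2203.09226 — 3 statements merged into one kernel-verified Lean document; each statement's English description precedes it below -/
import Mathlib

section
/- Let 0 < M < N, let Φ ∈ ℝ^{N×M} have orthonormal columns (ΦᵀΦ = I_M), and let P ∈ ℝ^{N×M} be a selection matrix whose columns are M distinct standard basis vectors of ℝ^N, such that PᵀΦ is invertible. Then for every x ∈ ℝ^N, the DEIM approximation error satisfies ‖x − Φ (PᵀΦ)⁻¹ Pᵀ x‖₂ ≤ ‖(PᵀΦ)⁻¹‖₂ · ‖x − Φ Φᵀ x‖₂. -/
open Matrix
open scoped Matrix.Norms.L2Operator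

/-- Multiplication of a real matrix with a Euclidean vector, valued in Euclidean space
(so that `‖·‖` is the Euclidean 2-norm). -/
noncomputable def mulVecE {m n : ℕ} (A : Matrix (Fin m) (Fin n) ℝ)
    (x : EuclideanSpace ℝ (Fin n)) : EuclideanSpace ℝ (Fin m) :=
  Matrix.toEuclideanLin A x

/-- `P : ℝ^{N×M}` is a selection matrix: its `M` columns are distinct standard basis
vectors of `ℝ^N`. -/
def IsSelectionMatrix {N M : ℕ} (P : Matrix (Fin N) (Fin M) ℝ) : Prop :=
  ∃ g : Fin M → Fin N, Function.Injective g ∧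
    ∀ i j, P i j = if i = g j then (1 : ℝ) else 0

/-!
Write `r = x - ΦΦᵀx`, which is orthogonal to the range of `Φ`, and `b = (PᵀΦ)⁻¹Pᵀr`. Since the
DEIM projector fixes the range of `Φ`, the error is `r - Φb`, whose squared norm is
`‖r‖² + ‖b‖²` by Pythagoras. Feeding `(PᵀΦ)⁻¹Pᵀ` the vector `y = ‖r‖²Φb + ‖b‖²r`, which it maps to
`(‖r‖² + ‖b‖²)b` while `‖y‖² = ‖r‖²‖b‖²(‖r‖² + ‖b‖²)`, and using `‖Pᵀ‖ ≤ 1`, gives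
`‖r‖² + ‖b‖² ≤ ‖(PᵀΦ)⁻¹‖²‖r‖²` when `b ≠ 0`. When `b = 0` it remains to see `‖(PᵀΦ)⁻¹‖ ≥ 1`, which
holds because `(PᵀΦ)⁻¹` inverts the contraction `PᵀΦ` on the nonzero space `ℝ^M`.
-/

open scoped RealInnerProductSpace

theorem ContinuousLinearMap.one_le_opNorm_of_leftInverse {𝕜 F G : Type*}
    [NontriviallyNormedField 𝕜] [NormedAddCommGroup F] [NormedSpace 𝕜 F] [Nontrivial F]
    [NormedAddCommGroup G] [NormedSpace 𝕜 G] {A : F → G} {B : G →L[𝕜] F}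
    (hA : ∀ v, ‖A v‖ ≤ ‖v‖) (hB : ∀ v, B (A v) = v) :
    1 ≤ ‖B‖ := by
  obtain ⟨v, hv⟩ := exists_ne (0 : F)
  refine le_of_mul_le_mul_right ?_ (norm_pos_iff.mpr hv)
  calc 1 * ‖v‖ = ‖B (A v)‖ := by rw [hB, one_mul]
    _ ≤ ‖B‖ * ‖A v‖ := B.le_opNorm _
    _ ≤ ‖B‖ * ‖v‖ := by gcongr; exact hA v

section ObliqueProjection

variable {E F G : Type*} [NormedAddCommGroup E] [InnerProductSpace ℝ E]
  [NormedAddCommGroup F] [InnerProductSpace ℝ F] [NormedAddCommGroup G] [NormedSpace ℝ G]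
  {U : F →L[ℝ] E} {S : E →L[ℝ] G} {B : G →L[ℝ] F}

theorem norm_sq_add_norm_sq_leftInverse_le (hU : ∀ v, ‖U v‖ = ‖v‖) (hS : ∀ y, ‖S y‖ ≤ ‖y‖)
    (hB : ∀ v, B (S (U v)) = v) {r : E} (hr : ∀ v, ⟪U v, r⟫ = 0) (hb : B (S r) ≠ 0) :
    ‖r‖ ^ 2 + ‖B (S r)‖ ^ 2 ≤ ‖B‖ ^ 2 * ‖r‖ ^ 2 := by
  set b := B (S r)
  set s := ‖r‖ ^ 2 + ‖b‖ ^ 2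
  set y := ‖r‖ ^ 2 • U b + ‖b‖ ^ 2 • r
  have hBy : B (S y) = s • b := by
    simp only [y, s, map_add, map_smul, hB, add_smul, b]
  have hy : ‖y‖ ^ 2 = ‖r‖ ^ 2 * ‖b‖ ^ 2 * s := by
    rw [norm_add_sq_real, real_inner_smul_left, real_inner_smul_right, hr, norm_smul, norm_smul,
      hU, Real.norm_of_nonneg (by positivity), Real.norm_of_nonneg (by positivity)]
    ring
  have hsb : s * ‖b‖ ≤ ‖B‖ * ‖y‖ :=
    calc s * ‖b‖ = ‖B (S y)‖ := by rw [hBy, norm_smul, Real.norm_of_nonneg (by positivity)]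
      _ ≤ ‖B‖ * ‖S y‖ := B.le_opNorm _
      _ ≤ ‖B‖ * ‖y‖ := by gcongr; exact hS y
  have hpos : 0 < s * ‖b‖ ^ 2 := by have := norm_pos_iff.mpr hb; positivity
  refine le_of_mul_le_mul_right ?_ hpos
  calc s * (s * ‖b‖ ^ 2) = (s * ‖b‖) ^ 2 := by ring
    _ ≤ (‖B‖ * ‖y‖) ^ 2 := by gcongr
    _ = ‖B‖ ^ 2 * ‖r‖ ^ 2 * (s * ‖b‖ ^ 2) := by rw [mul_pow, hy]; ring

theorem norm_sub_obliqueProjection_le [Nontrivial F] (hU : ∀ v, ‖U v‖ = ‖v‖)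
    (hS : ∀ y, ‖S y‖ ≤ ‖y‖) (hB : ∀ v, B (S (U v)) = v) {x : E} (w : F)
    (hx : ∀ v, ⟪U v, x - U w⟫ = 0) :
    ‖x - U (B (S x))‖ ≤ ‖B‖ * ‖x - U w‖ := by
  set r := x - U w
  set b := B (S r)
  have herr : x - U (B (S x)) = r - U b := by
    simp only [r, b, map_sub, hB]
    abel
  have hpyth : ‖r - U b‖ ^ 2 = ‖r‖ ^ 2 + ‖b‖ ^ 2 := by
    rw [norm_sub_sq_real, real_inner_comm, hx, hU]
    ring
  rw [herr, ← sq_le_sq₀ (norm_nonneg _) (by positivity), hpyth, mul_pow]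
  rcases eq_or_ne b 0 with hb | hb
  · have h1 : 1 ≤ ‖B‖ := ContinuousLinearMap.one_le_opNorm_of_leftInverse
      (fun v => (hS (U v)).trans_eq (hU v)) hB
    rw [hb, norm_zero, zero_pow two_ne_zero, add_zero]
    exact le_mul_of_one_le_left (sq_nonneg _) (one_le_pow₀ h1)
  · exact norm_sq_add_norm_sq_leftInverse_le hU hS hB hx hb

end ObliqueProjection

noncomputable def mulVecECLM {m n : ℕ} (A : Matrix (Fin m) (Fin n) ℝ) :
    EuclideanSpace ℝ (Fin n) →L[ℝ] EuclideanSpace ℝ (Fin m) :=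
  LinearMap.toContinuousLinearMap (toEuclideanLin A)

@[simp] theorem mulVecECLM_apply {m n : ℕ} (A : Matrix (Fin m) (Fin n) ℝ)
    (x : EuclideanSpace ℝ (Fin n)) : mulVecECLM A x = mulVecE A x := rfl

theorem norm_mulVecECLM {m n : ℕ} (A : Matrix (Fin m) (Fin n) ℝ) :
    ‖mulVecECLM A‖ = ‖A‖ := rfl

theorem mulVecE_mul {m n k : ℕ} (A : Matrix (Fin m) (Fin n) ℝ) (B : Matrix (Fin n) (Fin k) ℝ)
    (x : EuclideanSpace ℝ (Fin k)) : mulVecE (A * B) x = mulVecE A (mulVecE B x) := by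
  simp [mulVecE]

theorem mulVecE_sub {m n : ℕ} (A : Matrix (Fin m) (Fin n) ℝ) (x y : EuclideanSpace ℝ (Fin n)) :
    mulVecE A (x - y) = mulVecE A x - mulVecE A y :=
  map_sub _ x y

theorem mulVecE_one {n : ℕ} (x : EuclideanSpace ℝ (Fin n)) : mulVecE 1 x = x := by
  simp [mulVecE]

theorem inner_mulVecE_left {m n : ℕ} (A : Matrix (Fin m) (Fin n) ℝ)
    (v : EuclideanSpace ℝ (Fin n)) (w : EuclideanSpace ℝ (Fin m)) :
    ⟪mulVecE A v, w⟫ = ⟪v, mulVecE Aᵀ w⟫ := by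
  rw [mulVecE, mulVecE, ← conjTranspose_eq_transpose_of_trivial,
    toEuclideanLin_conjTranspose_eq_adjoint, LinearMap.adjoint_inner_right]

theorem norm_mulVecE_of_transpose_mul_self_eq_one {m n : ℕ} {Φ : Matrix (Fin m) (Fin n) ℝ}
    (hΦ : Φᵀ * Φ = 1) (v : EuclideanSpace ℝ (Fin n)) : ‖mulVecE Φ v‖ = ‖v‖ := by
  rw [← sq_eq_sq₀ (norm_nonneg _) (norm_nonneg _), ← real_inner_self_eq_norm_sq,
    inner_mulVecE_left, ← mulVecE_mul, hΦ, mulVecE_one, real_inner_self_eq_norm_sq]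

theorem inner_mulVecE_sub_mulVecE_mul_transpose {m n : ℕ} {Φ : Matrix (Fin m) (Fin n) ℝ}
    (hΦ : Φᵀ * Φ = 1) (v : EuclideanSpace ℝ (Fin n)) (x : EuclideanSpace ℝ (Fin m)) :
    ⟪mulVecE Φ v, x - mulVecE (Φ * Φᵀ) x⟫ = 0 := by
  rw [inner_mulVecE_left, mulVecE_sub, ← mulVecE_mul, ← Matrix.mul_assoc, hΦ,
    Matrix.one_mul, sub_self, inner_zero_right]

theorem IsSelectionMatrix.norm_mulVecE_transpose_le {N M : ℕ} {P : Matrix (Fin N) (Fin M) ℝ}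
    (hP : IsSelectionMatrix P) (y : EuclideanSpace ℝ (Fin N)) : ‖mulVecE Pᵀ y‖ ≤ ‖y‖ := by
  obtain ⟨g, hg, hPg⟩ := hP
  have hcoord : ∀ j, mulVecE Pᵀ y j = y (g j) := by
    intro j
    simp [mulVecE, mulVec, dotProduct, hPg]
  rw [← sq_le_sq₀ (norm_nonneg _) (norm_nonneg _), EuclideanSpace.real_norm_sq_eq,
    EuclideanSpace.real_norm_sq_eq]
  simp only [hcoord]
  calc ∑ j, y (g j) ^ 2 = ∑ i ∈ Finset.univ.image g, y i ^ 2 := by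
        rw [Finset.sum_image fun _ _ _ _ h => hg h]
    _ ≤ ∑ i, y i ^ 2 := Finset.sum_le_univ_sum_of_nonneg (fun i => sq_nonneg _)

theorem stmt2_general {N M : ℕ} (hM : 0 < M)
    (Φ P : Matrix (Fin N) (Fin M) ℝ)
    (hΦ : Φᵀ * Φ = 1)
    (hP : IsSelectionMatrix P)
    (hinv : IsUnit (Pᵀ * Φ)) :
    ∀ x : EuclideanSpace ℝ (Fin N),
      ‖x - mulVecE (Φ * (Pᵀ * Φ)⁻¹ * Pᵀ) x‖ ≤
        ‖(Pᵀ * Φ)⁻¹‖ * ‖x - mulVecE (Φ * Φᵀ) x‖ := by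
  intro x
  have : NeZero M := ⟨hM.ne'⟩
  have hleft : ∀ v, mulVecE (Pᵀ * Φ)⁻¹ (mulVecE Pᵀ (mulVecE Φ v)) = v := fun v => by
    rw [← mulVecE_mul, ← mulVecE_mul, Matrix.mul_assoc,
      nonsing_inv_mul _ ((isUnit_iff_isUnit_det _).mp hinv), mulVecE_one]
  have hbound := norm_sub_obliqueProjection_le (U := mulVecECLM Φ) (S := mulVecECLM Pᵀ)
    (B := mulVecECLM (Pᵀ * Φ)⁻¹) (norm_mulVecE_of_transpose_mul_self_eq_one hΦ)
    hP.norm_mulVecE_transpose_le hleft (mulVecE Φᵀ x)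
    fun v => by
      simpa only [mulVecECLM_apply, mulVecE_mul] using
        inner_mulVecE_sub_mulVecE_mul_transpose hΦ v x
  simpa only [mulVecECLM_apply, norm_mulVecECLM, mulVecE_mul, Matrix.mul_assoc] using hbound

/-- DEIM approximation error bound: for `0 < M < N`, `Φ` with orthonormal columns and a
selection matrix `P` with `PᵀΦ` invertible, every `x ∈ ℝ^N` satisfies
`‖x − Φ(PᵀΦ)⁻¹Pᵀx‖₂ ≤ ‖(PᵀΦ)⁻¹‖₂ ‖x − ΦΦᵀx‖₂`. -/
theorem stmt2 {N M : ℕ} (hM : 0 < M) (hMN : M < N)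
    (Φ P : Matrix (Fin N) (Fin M) ℝ)
    (hΦ : Φᵀ * Φ = 1)
    (hP : IsSelectionMatrix P)
    (hinv : IsUnit (Pᵀ * Φ)) :
    ∀ x : EuclideanSpace ℝ (Fin N),
      ‖x - mulVecE (Φ * (Pᵀ * Φ)⁻¹ * Pᵀ) x‖ ≤
        ‖(Pᵀ * Φ)⁻¹‖ * ‖x - mulVecE (Φ * Φᵀ) x‖ :=
  stmt2_general hM Φ P hΦ hP hinv
end

section
/- (A posteriori error estimate for unsteady reduced basis models, time-invariant case.) Let A ∈ ℝ^{N×N}, V ∈ ℝ^{N×n}, T > 0, and C₁ ≥ 0 be such that ‖exp(s A)‖₂ ≤ C₁ for all s ∈ [0,T]. Let f : [0,T] → ℝ^N be continuous, let u : [0,T] → ℝ^N satisfy u′(t) = A u(t) + f(t) for all t ∈ [0,T], and let u_n : [0,T] → ℝⁿ be continuously differentiable. Define the residual r(t) := A V u_n(t) + f(t) − V u_n′(t). Then for every t ∈ [0,T], ‖u(t) − V u_n(t)‖₂ ≤ C₁ ( ‖u(0) − V u_n(0)‖₂ + ∫₀ᵗ ‖r(τ)‖₂ dτ ). -/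
/-!
The error `e = u - V uₙ` solves `e' = A e + r`, so by Duhamel's formula
`e t = exp (t A) e 0 + ∫₀ᵗ exp ((t - τ) A) r τ dτ`; every propagator occurring here is
`exp (s A)` with `s ∈ [0, t]`, hence has norm at most `C₁`.
-/

open Matrix
open scoped Matrix.Norms.L2Operator

open NormedSpace Set

theorem hasDerivAt_exp_sub_smul {𝔸 : Type*} [NormedRing 𝔸] [NormedAlgebra ℝ 𝔸] [CompleteSpace 𝔸]
    (a : 𝔸) (t τ : ℝ) :
    HasDerivAt (fun σ ↦ exp ((t - σ) • a)) (-(exp ((t - τ) • a) * a)) τ := by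
  have := (hasDerivAt_exp_smul_const (𝕂 := ℝ) a (t - τ)).scomp τ
    ((hasDerivAt_id τ).const_sub t)
  rwa [neg_one_smul] at this

section Duhamel

variable {E : Type*} [NormedAddCommGroup E] [NormedSpace ℝ E] [CompleteSpace E]
  (A : E →L[ℝ] E)

theorem hasDerivAt_exp_sub_smul_apply {e : ℝ → E} {e' : E} {t τ : ℝ} (he : HasDerivAt e e' τ) :
    HasDerivAt (fun σ ↦ exp ((t - σ) • A) (e σ)) (exp ((t - τ) • A) (e' - A (e τ))) τ := by
  convert (hasDerivAt_exp_sub_smul A t τ).clm_apply he using 1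
  rw [map_sub, sub_eq_add_neg, add_comm]
  rfl

theorem eq_exp_smul_apply_add_integral_of_hasDerivAt {e r : ℝ → E} {t : ℝ}
    (he : ∀ τ ∈ uIcc 0 t, HasDerivAt e (A (e τ) + r τ) τ) (hr : ContinuousOn r (uIcc 0 t)) :
    e t = exp (t • A) (e 0) + ∫ τ in 0..t, exp ((t - τ) • A) (r τ) := by
  have hderiv : ∀ τ ∈ uIcc 0 t,
      HasDerivAt (fun σ ↦ exp ((t - σ) • A) (e σ)) (exp ((t - τ) • A) (r τ)) τ := fun τ hτ ↦ by
    simpa using hasDerivAt_exp_sub_smul_apply A (he τ hτ)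
  have hexp : Continuous fun τ : ℝ ↦ exp ((t - τ) • A) :=
    continuous_iff_continuousAt.2 fun τ ↦ (hasDerivAt_exp_sub_smul A t τ).continuousAt
  rw [intervalIntegral.integral_eq_sub_of_hasDerivAt hderiv
    (hexp.continuousOn.clm_apply hr).intervalIntegrable]
  simp

theorem norm_le_mul_norm_add_integral_of_hasDerivAt {e r : ℝ → E} {t C : ℝ} (ht : 0 ≤ t)
    (hexp : ∀ s ∈ Icc 0 t, ‖exp (s • A)‖ ≤ C)
    (he : ∀ τ ∈ Icc 0 t, HasDerivAt e (A (e τ) + r τ) τ) (hr : ContinuousOn r (Icc 0 t)) :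
    ‖e t‖ ≤ C * (‖e 0‖ + ∫ τ in 0..t, ‖r τ‖) := by
  rw [← uIcc_of_le ht] at he hr
  have hbound : ∀ τ ∈ Icc 0 t, ‖exp ((t - τ) • A) (r τ)‖ ≤ C * ‖r τ‖ := fun τ hτ ↦
    (exp ((t - τ) • A)).le_of_opNorm_le (hexp _ ⟨by linarith [hτ.2], by linarith [hτ.1]⟩) _
  have hrint : IntervalIntegrable r MeasureTheory.volume 0 t := hr.intervalIntegrable
  calc ‖e t‖ ≤ ‖exp (t • A) (e 0)‖ + ‖∫ τ in 0..t, exp ((t - τ) • A) (r τ)‖ := by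
        rw [eq_exp_smul_apply_add_integral_of_hasDerivAt A he hr]
        exact norm_add_le _ _
    _ ≤ C * ‖e 0‖ + ∫ τ in 0..t, C * ‖r τ‖ := by
        gcongr
        · exact (exp (t • A)).le_of_opNorm_le (hexp t ⟨ht, le_rfl⟩) _
        · exact intervalIntegral.norm_integral_le_of_norm_le ht
            (MeasureTheory.ae_of_all _ fun τ hτ ↦ hbound τ (Ioc_subset_Icc_self hτ))
            (hrint.norm.const_mul C)
    _ = C * (‖e 0‖ + ∫ τ in 0..t, ‖r τ‖) := by
        rw [intervalIntegral.integral_const_mul, mul_add]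

end Duhamel

theorem toEuclideanCLM_exp {𝕜 ι : Type*} [RCLike 𝕜] [Fintype ι] [DecidableEq ι]
    (A : Matrix ι ι 𝕜) :
    toEuclideanCLM (𝕜 := 𝕜) (exp A) = exp (toEuclideanCLM (𝕜 := 𝕜) A) :=
  map_exp_of_mem_ball (𝕂 := 𝕜) (toEuclideanCLM (𝕜 := 𝕜) (n := ι))
    (AddMonoidHomClass.isometry_of_norm _ fun _ ↦ rfl).continuous A
    ((expSeries_radius_eq_top 𝕜 (Matrix ι ι 𝕜)).symm ▸ edist_lt_top _ _)

theorem stmt7_general {N n : ℕ}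
    (A : Matrix (Fin N) (Fin N) ℝ) (V : Matrix (Fin N) (Fin n) ℝ)
    (T : ℝ) (C₁ : ℝ)
    (hexp : ∀ s ∈ Set.Icc (0 : ℝ) T, ‖NormedSpace.exp (s • A)‖ ≤ C₁)
    (f : ℝ → EuclideanSpace ℝ (Fin N)) (hf : ContinuousOn f (Set.Icc 0 T))
    (u : ℝ → EuclideanSpace ℝ (Fin N))
    (hu : ∀ t ∈ Set.Icc (0 : ℝ) T, HasDerivAt u (mulVecE A (u t) + f t) t)
    (un un' : ℝ → EuclideanSpace ℝ (Fin n))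
    (hun : ∀ t ∈ Set.Icc (0 : ℝ) T, HasDerivAt un (un' t) t)
    (hun' : ContinuousOn un' (Set.Icc 0 T))
    (r : ℝ → EuclideanSpace ℝ (Fin N))
    (hr : ∀ t : ℝ, r t = mulVecE A (mulVecE V (un t)) + f t - mulVecE V (un' t)) :
    ∀ t ∈ Set.Icc (0 : ℝ) T,
      ‖u t - mulVecE V (un t)‖ ≤
        C₁ * (‖u 0 - mulVecE V (un 0)‖ + ∫ τ in (0 : ℝ)..t, ‖r τ‖) := by
  intro t ht
  let LA := toEuclideanCLM (𝕜 := ℝ) A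
  let LV := LinearMap.toContinuousLinearMap (toEuclideanLin V)
  have hLA : ∀ x, LA x = mulVecE A x := fun _ ↦ rfl
  have hLV : ∀ x, LV x = mulVecE V x := fun _ ↦ rfl
  have hexpL : ∀ s ∈ Icc 0 t, ‖exp (s • LA)‖ ≤ C₁ := fun s hs ↦ by
    rw [← map_smul, ← toEuclideanCLM_exp, l2_opNorm_toEuclideanCLM]
    exact hexp s ⟨hs.1, hs.2.trans ht.2⟩
  have hsub : Icc 0 t ⊆ Icc 0 T := Icc_subset_Icc_right ht.2
  have herror : ∀ τ ∈ Icc 0 t,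
      HasDerivAt (fun σ ↦ u σ - mulVecE V (un σ)) (LA (u τ - mulVecE V (un τ)) + r τ) τ := by
    intro τ hτ
    refine ((hu τ (hsub hτ)).sub
      (LV.hasFDerivAt.comp_hasDerivAt τ (hun τ (hsub hτ)))).congr_deriv ?_
    rw [hr, map_sub, hLA, hLA, hLV]
    abel
  have hr_cont : ContinuousOn r (Icc 0 T) := by
    have hun_cont : ContinuousOn un (Icc 0 T) := fun τ hτ ↦
      (hun τ hτ).continuousAt.continuousWithinAt
    refine ContinuousOn.congr ?_ fun τ _ ↦ hr τ
    exact (((LA.comp LV).continuous.comp_continuousOn hun_cont).add hf).sub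
      (LV.continuous.comp_continuousOn hun')
  exact norm_le_mul_norm_add_integral_of_hasDerivAt (e := fun σ ↦ u σ - mulVecE V (un σ)) LA ht.1
    hexpL herror (hr_cont.mono hsub)

/-- A posteriori error estimate for unsteady reduced basis models (time-invariant case):
if `‖exp(sA)‖₂ ≤ C₁` on `[0,T]`, `u′ = Au + f`, and `r(t) = A V u_n(t) + f(t) − V u_n′(t)`,
then `‖u(t) − V u_n(t)‖₂ ≤ C₁ (‖u(0) − V u_n(0)‖₂ + ∫₀ᵗ ‖r(τ)‖₂ dτ)` on `[0,T]`. -/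
theorem stmt7 {N n : ℕ}
    (A : Matrix (Fin N) (Fin N) ℝ) (V : Matrix (Fin N) (Fin n) ℝ)
    (T : ℝ) (hT : 0 < T) (C₁ : ℝ) (hC₁ : 0 ≤ C₁)
    (hexp : ∀ s ∈ Set.Icc (0 : ℝ) T, ‖NormedSpace.exp (s • A)‖ ≤ C₁)
    (f : ℝ → EuclideanSpace ℝ (Fin N)) (hf : ContinuousOn f (Set.Icc 0 T))
    (u : ℝ → EuclideanSpace ℝ (Fin N))
    (hu : ∀ t ∈ Set.Icc (0 : ℝ) T, HasDerivAt u (mulVecE A (u t) + f t) t)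
    (un un' : ℝ → EuclideanSpace ℝ (Fin n))
    (hun : ∀ t ∈ Set.Icc (0 : ℝ) T, HasDerivAt un (un' t) t)
    (hun' : ContinuousOn un' (Set.Icc 0 T))
    (r : ℝ → EuclideanSpace ℝ (Fin N))
    (hr : ∀ t : ℝ, r t = mulVecE A (mulVecE V (un t)) + f t - mulVecE V (un' t)) :
    ∀ t ∈ Set.Icc (0 : ℝ) T,
      ‖u t - mulVecE V (un t)‖ ≤
        C₁ * (‖u 0 - mulVecE V (un 0)‖ + ∫ τ in (0 : ℝ)..t, ‖r τ‖) :=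
  stmt7_general A V T C₁ hexp f hf u hu un un' hun hun' r hr
end

section
/- Let A be an n×n complex matrix all of whose eigenvalues have strictly negative real part. Then there exists a constant C ≥ 0 such that ‖exp(t A)‖ ≤ C for all t ≥ 0, i.e. sup_{t ≥ 0} ‖exp(t A)‖ < ∞. -/
/-!
The eigenvalues of `exp A` are the numbers `e^λ` with `λ` an eigenvalue of `A`: since `A` commutes
with `exp A`, it preserves each eigenspace of `exp A` and so has an eigenvector there. Hence the
spectral radius of `exp A` is `< 1`, and by Gelfand's formula the powers `(exp A)^k` are bounded.
Finally `exp (t • A) = exp (s • A) * (exp A)^⌊t⌋₊` with `s = t - ⌊t⌋₊ ∈ [0, 1]`, and the first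
factor is bounded by compactness of `[0, 1]`.
-/

open Matrix
open scoped Matrix.Norms.L2Operator

open NormedSpace Set Filter

namespace Module.End

variable {K V : Type*} [Field K] [IsAlgClosed K] [AddCommGroup V] [Module K V]
  [FiniteDimensional K V]

theorem exists_hasEigenvector_of_commute {f g : End K V} (hfg : Commute f g) {μ : K}
    (hμ : g.HasEigenvalue μ) : ∃ l v, f.HasEigenvector l v ∧ g.HasEigenvector μ v := by
  have : Nontrivial (g.eigenspace μ) := Submodule.nontrivial_iff_ne_bot.mpr hμ
  let f' := f.restrict (mapsTo_genEigenspace_of_comm hfg.symm μ 1)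
  obtain ⟨l, hl⟩ := exists_eigenvalue f'
  obtain ⟨w, hw⟩ := hl.exists_hasEigenvector
  have hw0 : (w : V) ≠ 0 := by simpa using hw.2
  refine ⟨l, w, ⟨?_, hw0⟩, ⟨w.2, hw0⟩⟩
  rw [mem_eigenspace_iff]
  exact congrArg Subtype.val hw.apply_eq_smul

end Module.End

namespace Matrix

variable {m 𝕂 : Type*} [Fintype m] [DecidableEq m] [RCLike 𝕂]

theorem exp_mulVec_of_mulVec_eq_smul {A : Matrix m m 𝕂} {v : m → 𝕂} {l : 𝕂}
    (h : A *ᵥ v = l • v) : exp A *ᵥ v = exp l • v := by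
  have hpow (k : ℕ) : A ^ k *ᵥ v = l ^ k • v := by
    induction k with
    | zero => simp
    | succ k ih => rw [pow_succ, ← mulVec_mulVec, h, mulVec_smul, ih, smul_smul, pow_succ']
  let L : Matrix m m 𝕂 →L[𝕂] m → 𝕂 := LinearMap.toContinuousLinearMap
    ((LinearMap.applyₗ v).comp (toLinAlgEquiv' (R := 𝕂) (n := m)).toLinearMap)
  have hL (M : Matrix m m 𝕂) : L M = M *ᵥ v := rfl
  rw [← hL, exp_eq_tsum 𝕂, exp_eq_tsum 𝕂, L.map_tsum (expSeries_summable' A)]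
  simp_rw [map_smul, hL, hpow, ← smul_assoc]
  exact (expSeries_summable' l).tsum_smul_const v

theorem spectrum_exp (A : Matrix m m ℂ) : spectrum ℂ (exp A) = Complex.exp '' spectrum ℂ A := by
  rw [Complex.exp_eq_exp_ℂ]
  refine Subset.antisymm (fun μ hμ ↦ ?_) (image_subset_iff.mpr fun l ↦ spectrum.exp_mem_exp A)
  rw [← AlgEquiv.spectrum_eq toLinAlgEquiv', ← Module.End.hasEigenvalue_iff_mem_spectrum] at hμ
  obtain ⟨l, v, hA, hexpA⟩ := Module.End.exists_hasEigenvector_of_commute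
    ((Commute.refl A).exp_right.map toLinAlgEquiv') hμ
  refine ⟨l, ?_, smul_left_injective ℂ hA.2 ?_⟩
  · rw [← AlgEquiv.spectrum_eq toLinAlgEquiv', ← Module.End.hasEigenvalue_iff_mem_spectrum]
    exact Module.End.hasEigenvalue_of_hasEigenvector hA
  · change exp l • v = μ • v
    rw [← exp_mulVec_of_mulVec_eq_smul hA.apply_eq_smul]
    exact hexpA.apply_eq_smul

theorem spectralRadius_exp_lt_one {A : Matrix m m ℂ} (hA : ∀ μ ∈ spectrum ℂ A, μ.re < 0) :
    spectralRadius ℂ (exp A) < 1 := by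
  rcases (spectrum ℂ (exp A)).eq_empty_or_nonempty with h | h
  · simp [spectralRadius, h]
  · refine spectrum.spectralRadius_lt_of_forall_lt_of_nonempty h ?_
    rw [spectrum_exp]
    rintro _ ⟨l, hl, rfl⟩
    rw [← NNReal.coe_lt_coe, coe_nnnorm, Complex.norm_exp, NNReal.coe_one, Real.exp_lt_one_iff]
    exact hA l hl

end Matrix

theorem bddAbove_range_norm_pow_of_spectralRadius_lt_one {A : Type*} [NormedRing A]
    [NormedAlgebra ℂ A] [CompleteSpace A] {a : A} (ha : spectralRadius ℂ a < 1) :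
    BddAbove (range fun k : ℕ ↦ ‖a ^ k‖) := by
  refine IsBoundedUnder.bddAbove_range (isBoundedUnder_of_eventually_le (a := 1) ?_)
  filter_upwards [(spectrum.pow_norm_pow_one_div_tendsto_nhds_spectralRadius a).eventually_lt_const
    ha, eventually_ge_atTop 1] with k hk hk1
  rw [ENNReal.ofReal_lt_one, Real.rpow_lt_one_iff' (norm_nonneg _) (by positivity)] at hk
  exact hk.le

theorem bddAbove_norm_exp_smul_of_bddAbove_norm_exp_pow {𝕂 𝔸 : Type*} [RCLike 𝕂] [NormedRing 𝔸]
    [NormedAlgebra 𝕂 𝔸] [CompleteSpace 𝔸] {a : 𝔸}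
    (ha : BddAbove (range fun k : ℕ ↦ ‖exp a ^ k‖)) :
    BddAbove ((fun t : ℝ ↦ ‖exp ((t : 𝕂) • a)‖) '' Ici 0) := by
  let +nondep : NormedAlgebra ℚ 𝔸 := .restrictScalars ℚ 𝕂 𝔸
  obtain ⟨C, hC⟩ := ha
  obtain ⟨M, hM⟩ := (isCompact_Icc (a := (0 : ℝ)) (b := 1)).exists_bound_of_continuousOn
    (f := fun s : ℝ ↦ exp ((s : 𝕂) • a)) (by fun_prop)
  have hM0 : 0 ≤ M := (norm_nonneg _).trans (hM 0 ⟨le_rfl, zero_le_one⟩)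
  refine ⟨M * C, ?_⟩
  rintro _ ⟨t, ht, rfl⟩
  set s := t - ⌊t⌋₊
  have hs : s ∈ Icc (0 : ℝ) 1 :=
    ⟨sub_nonneg.2 (Nat.floor_le ht), by linarith [Nat.lt_floor_add_one t]⟩
  have hsplit : exp ((t : 𝕂) • a) = exp ((s : 𝕂) • a) * exp a ^ ⌊t⌋₊ := by
    rw [← NormedSpace.exp_nsmul, ← NormedSpace.exp_add_of_commute
      (((Commute.refl a).smul_left _).smul_right _), ← Nat.cast_smul_eq_nsmul 𝕂, ← add_smul]
    simp [s]
  calc ‖exp ((t : 𝕂) • a)‖ ≤ ‖exp ((s : 𝕂) • a)‖ * ‖exp a ^ ⌊t⌋₊‖ := hsplit ▸ norm_mul_le _ _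
    _ ≤ M * C := mul_le_mul (hM s hs) (hC ⟨_, rfl⟩) (norm_nonneg _) hM0

/-- If all eigenvalues of an `n×n` complex matrix `A` have strictly negative real part,
then `sup_{t ≥ 0} ‖exp(tA)‖ < ∞`: there is `C ≥ 0` with `‖exp(tA)‖ ≤ C` for all `t ≥ 0`
(here `‖·‖` is the operator norm induced by the Euclidean norm). -/
theorem stmt8 {n : ℕ} (A : Matrix (Fin n) (Fin n) ℂ)
    (hA : ∀ μ ∈ spectrum ℂ A, μ.re < 0) :
    ∃ C : ℝ, 0 ≤ C ∧ ∀ t : ℝ, 0 ≤ t → ‖NormedSpace.exp ((t : ℂ) • A)‖ ≤ C := by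
  have hpow : BddAbove (range fun k : ℕ ↦ ‖exp A ^ k‖) :=
    bddAbove_range_norm_pow_of_spectralRadius_lt_one (spectralRadius_exp_lt_one hA)
  obtain ⟨C, hC⟩ := bddAbove_norm_exp_smul_of_bddAbove_norm_exp_pow (𝕂 := ℂ) hpow
  exact ⟨max C 0, le_max_right _ _, fun t ht ↦ (hC ⟨t, ht, rfl⟩).trans (le_max_left _ _)⟩
end
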